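/- Let n ≥ 2 and p : Fin n → ℤ with ∑ i, p i = 0. Then there exists a list L of transactions that settles p with L.length < n − 1 if and only if there exists a subset S ⊆ Fin n with S nonempty, S ≠ Fin n, and ∑ i ∈ S, p i = 0. -/

import Mathlib

/-- A transaction `(i, j, a)`: participant `i` pays amount `a` to participant `j`. -/
abbrev Txn (m : ℕ) := Fin m × Fin m × ℤ

/-- All transactions in the list are valid: distinct sender/receiver, positive amount. -/
def ValidTxns {m : ℕ} (L : List (Txn m)) : Prop :=
  ∀ t ∈ L, t.1 ≠ t.2.1 ∧ 0 < t.2.2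

/-- `L` settles the balance vector `p`: for every participant `k`, the total amount sent
by `k` minus the total amount received by `k` equals `p k`. -/
def Settles {m : ℕ} (L : List (Txn m)) (p : Fin m → ℤ) : Prop :=
  ∀ k : Fin m,
    ((L.filter (fun t => t.1 = k)).map (fun t => t.2.2)).sum
      - ((L.filter (fun t => t.2.1 = k)).map (fun t => t.2.2)).sum = p k

/-!
Record a list of transactions by its vector of net outflows `netFlow`, so that settling `p`
means `netFlow L = p`. Fewer than `n - 1` transactions span a graph on the participants with
fewer than `n - 1` edges, hence a disconnected one; no transaction leaves a connected
component `S`, so the balances on `S` sum to zero. Conversely, a zero-sum block `S` is settled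
by `|S| - 1` payments to a hub in `S`, and so is its complement, which makes `n - 2`
transactions in total.
-/

open Finset SimpleGraph

section Flow

variable {V : Type*} [DecidableEq V]

def netFlow (L : List (V × V × ℤ)) : V → ℤ :=
  (L.map fun t => Pi.single t.1 t.2.2 - Pi.single t.2.1 t.2.2).sum

@[simp]
lemma netFlow_nil : netFlow ([] : List (V × V × ℤ)) = 0 := rfl

lemma netFlow_cons (t : V × V × ℤ) (L : List (V × V × ℤ)) :
    netFlow (t :: L) = Pi.single t.1 t.2.2 - Pi.single t.2.1 t.2.2 + netFlow L := by
  simp [netFlow]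

lemma netFlow_append (L₁ L₂ : List (V × V × ℤ)) :
    netFlow (L₁ ++ L₂) = netFlow L₁ + netFlow L₂ := by
  simp [netFlow]

lemma sum_netFlow_eq_zero {L : List (V × V × ℤ)} {S : Finset V}
    (hS : ∀ t ∈ L, t.1 ∈ S ↔ t.2.1 ∈ S) : ∑ k ∈ S, netFlow L k = 0 := by
  induction L with
  | nil => simp
  | cons t L ih =>
    rw [List.forall_mem_cons] at hS
    simp only [netFlow_cons, Pi.add_apply, Pi.sub_apply, sum_add_distrib, sum_sub_distrib,
      sum_pi_single', ih hS.2, hS.1]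
    simp

end Flow

lemma settles_iff {m : ℕ} {L : List (Txn m)} {p : Fin m → ℤ} :
    Settles L p ↔ netFlow L = p := by
  suffices h : ∀ k, ((L.filter (fun t => t.1 = k)).map (fun t => t.2.2)).sum
      - ((L.filter (fun t => t.2.1 = k)).map (fun t => t.2.2)).sum = netFlow L k by
    simp only [Settles, h, funext_iff]
  intro k
  induction L with
  | nil => simp
  | cons t L ih =>
    rw [netFlow_cons, Pi.add_apply, ← ih]
    by_cases h₁ : t.1 = k <;> by_cases h₂ : t.2.1 = k <;>
      simp [h₁, h₂, Ne.symm] <;> ring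

section Graph

variable {V α : Type*}

def txnGraph (L : List (V × V × α)) : SimpleGraph V :=
  fromEdgeSet {e | ∃ t ∈ L, s(t.1, t.2.1) = e}

lemma reachable_txnGraph {L : List (V × V × α)} {t : V × V × α} (ht : t ∈ L) :
    (txnGraph L).Reachable t.1 t.2.1 := by
  by_cases h : t.1 = t.2.1
  · rw [h]
  · exact Adj.reachable ((fromEdgeSet_adj _).2 ⟨⟨t, ht, rfl⟩, h⟩)

lemma card_edgeSet_txnGraph_le (L : List (V × V × α)) :
    Nat.card (txnGraph L).edgeSet ≤ L.length := by
  classical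
  have hsub : (txnGraph L).edgeSet ⊆ (L.map fun t => s(t.1, t.2.1)).toFinset := by
    rintro e he
    obtain ⟨⟨t, ht, rfl⟩, -⟩ := (edgeSet_fromEdgeSet _ ▸ he : _)
    exact List.mem_toFinset.2 (List.mem_map.2 ⟨t, ht, rfl⟩)
  calc Nat.card (txnGraph L).edgeSet
      ≤ Nat.card ((L.map fun t => s(t.1, t.2.1)).toFinset : Set (Sym2 V)) :=
        Nat.card_mono (Finset.finite_toSet _) hsub
    _ ≤ L.length := by
        rw [Nat.card_coe_set_eq, Set.ncard_coe_finset]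
        exact (List.toFinset_card_le _).trans (List.length_map _).le

lemma exists_closed_of_length_lt [Fintype V] [DecidableEq V] (L : List (V × V × α))
    (hL : L.length + 1 < Fintype.card V) :
    ∃ S : Finset V, S.Nonempty ∧ S ≠ univ ∧ ∀ t ∈ L, (t.1 ∈ S ↔ t.2.1 ∈ S) := by
  have hdisc : ¬(txnGraph L).Preconnected := by
    intro hpre
    have : Nonempty V := Fintype.card_pos_iff.1 (by omega)
    have hV := (Connected.mk hpre).card_vert_le_card_edgeSet_add_one
    rw [Nat.card_eq_fintype_card] at hV
    have := card_edgeSet_txnGraph_le L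
    omega
  obtain ⟨u, v, huv⟩ : ∃ u v, ¬(txnGraph L).Reachable u v := by
    simpa [Preconnected] using hdisc
  classical
  refine ⟨univ.filter ((txnGraph L).Reachable u), ⟨u, by simp⟩,
    fun h => huv (by simpa using (eq_univ_iff_forall.1 h) v), fun t ht => ?_⟩
  have := reachable_txnGraph ht
  simp only [mem_filter, mem_univ, true_and]
  exact ⟨fun h => h.trans this, fun h => h.trans this.symm⟩

end Graph

section Star

variable {V : Type*} [DecidableEq V]

def payment (i j : V) (a : ℤ) : V × V × ℤ :=
  if 0 < a then (i, j, a) else (j, i, -a)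

lemma netFlow_map_payment (T : Finset V) (c : V) (q : V → ℤ) :
    netFlow (T.toList.map fun i => payment i c (q i)) =
      ∑ i ∈ T, (Pi.single i (q i) - Pi.single c (q i)) := by
  have hpay : ∀ i (a : ℤ), Pi.single (payment i c a).1 (payment i c a).2.2 -
      Pi.single (payment i c a).2.1 (payment i c a).2.2 =
        (Pi.single i a - Pi.single c a : V → ℤ) := by
    intro i a
    unfold payment
    split_ifs <;> simp [Pi.single_neg, neg_add_eq_sub]
  rw [netFlow, List.map_map]
  simp only [Function.comp_def, hpay]
  exact sum_map_toList T _

lemma exists_star_settlement {S : Finset V} (hS : S.Nonempty) {q : V → ℤ}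
    (hq : ∑ k ∈ S, q k = 0) :
    ∃ L : List (V × V × ℤ), (∀ t ∈ L, t.1 ≠ t.2.1 ∧ 0 < t.2.2) ∧
      netFlow L = (fun k => if k ∈ S then q k else 0) ∧ L.length < S.card := by
  obtain ⟨c, hc⟩ := hS
  set T := (S.erase c).filter (q · ≠ 0) with hT
  have memT {i} : i ∈ T ↔ i ≠ c ∧ i ∈ S ∧ q i ≠ 0 := by simp [T, and_assoc]
  have sumT : ∑ i ∈ T, q i = -q c := by
    rw [← add_sum_erase S q hc] at hq
    rw [hT, sum_filter_ne_zero]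
    linarith
  refine ⟨T.toList.map fun i => payment i c (q i), ?_, ?_, ?_⟩
  · simp only [List.mem_map, mem_toList]
    rintro _ ⟨i, hi, rfl⟩
    obtain ⟨hic, -, hqi⟩ := memT.1 hi
    unfold payment
    split_ifs <;> exact ⟨by simpa [eq_comm] using hic, by dsimp only; omega⟩
  · ext k
    rw [netFlow_map_payment, Finset.sum_apply]
    simp only [Pi.sub_apply, sum_sub_distrib, sum_pi_single]
    by_cases hk : k = c
    · subst hk; simp [memT, hc, sumT]
    · by_cases hqk : q k = 0 <;> simp [memT, hk, hqk]
  · rw [List.length_map, length_toList]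
    exact (card_filter_le _ _).trans_lt (card_erase_lt_of_mem hc)

end Star

theorem few_transactions_iff_balanced_subset_general (n : ℕ)
    (p : Fin n → ℤ) (hsum : ∑ i, p i = 0) :
    (∃ L : List (Txn n), ValidTxns L ∧ Settles L p ∧ L.length < n - 1) ↔
    (∃ S : Finset (Fin n), S.Nonempty ∧ S ≠ Finset.univ ∧ ∑ i ∈ S, p i = 0) := by
  constructor
  · rintro ⟨L, -, hL, hlen⟩
    obtain ⟨S, hne, hS, hclosed⟩ :=
      exists_closed_of_length_lt L (by rw [Fintype.card_fin]; omega)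
    exact ⟨S, hne, hS, settles_iff.1 hL ▸ sum_netFlow_eq_zero hclosed⟩
  · rintro ⟨S, hne, hS, hp⟩
    have hpc : ∑ i ∈ Sᶜ, p i = 0 := by rwa [← sum_add_sum_compl S p, hp, zero_add] at hsum
    obtain ⟨L₁, hv₁, hL₁, hlen₁⟩ := exists_star_settlement hne hp
    obtain ⟨L₂, hv₂, hL₂, hlen₂⟩ := exists_star_settlement
      (by simpa [nonempty_iff_ne_empty] using hS) hpc
    refine ⟨L₁ ++ L₂, fun t ht => (List.mem_append.1 ht).elim (hv₁ t) (hv₂ t), ?_, ?_⟩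
    · rw [settles_iff, netFlow_append, hL₁, hL₂]
      ext k
      by_cases hk : k ∈ S <;> simp [hk]
    · have := card_add_card_compl S
      rw [Fintype.card_fin] at this
      rw [List.length_append]
      omega

/-- characterization at the core of NP-completeness of SEP: `p` can be
settled with strictly fewer than `n - 1` transactions iff there is a nonempty proper
subset of participants whose balances sum to zero. -/
theorem few_transactions_iff_balanced_subset (n : ℕ) (hn : 2 ≤ n)
    (p : Fin n → ℤ) (hsum : ∑ i, p i = 0) :
    (∃ L : List (Txn n), ValidTxns L ∧ Settles L p ∧ L.length < n - 1) ↔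
    (∃ S : Finset (Fin n), S.Nonempty ∧ S ≠ Finset.univ ∧ ∑ i ∈ S, p i = 0) :=
  few_transactions_iff_balanced_subset_general n p hsum
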